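/- Let π₀ be the uniform policy on Y (π₀(y|x) = 1/K for all x, y, where K = |Y|) and consider the DPO loss L_DPO(θ) of the softmax-parametrized policy π_θ with preference probabilities p*(x,y₁,y₂) = σ(r(x,y₁) − r(x,y₂)). Fix ε₀ > 0 and set c₀ = σ(ε₀/τ)·σ(−ε₀/τ) − 1 ∈ (−1, 0). For θ : X × Y → ℝ and x ∈ X, let Ω(θ,x) be the set of pairs (y₁,y₂) ∈ Y × Y such that both |log(p*(x,y₁,y₂)/(1 − p*(x,y₁,y₂)))| ≥ ε₀ and |log(π_θ(y₁|x)·π_ref(y₂|x)/(π_θ(y₂|x)·π_ref(y₁|x)))| ≥ ε₀ hold, and set γ(θ,x) = |Ω(θ,x)|/K². Let γ ∈ [0,1]. Then at every θ for which γ(θ,x) ≥ γ for all x ∈ X, the second derivative of L_DPO satisfies |D²L_DPO(θ)(z,z)| ≤ (4·(γ·c₀ + 1)/τ²)·Σ_{x,y} z(x,y)² for every z : X × Y → ℝ. -/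

import Mathlib

/-!
Each summand of the DPO loss is the logistic loss `-(p log σ(h) + (1 - p) log σ(-h))` of the
margin `h`, and `h` is affine in `θ` because the softmax normaliser cancels in the log-ratio.
Hence `D²L(θ)(z, z) = Σₓ D(x) K⁻² Σ_{y₁,y₂} σ'(h) ((z(x,y₁) - z(x,y₂)) / τ)²` with
`σ' = σ (1 - σ) = (2 + 2 cosh h)⁻¹`, which is at most `1/4` and decreases in `|h|`.
On `Ω(θ, x)` the margin has `|h| ≥ ε₀ / τ`, so there `σ'(h) ≤ σ(ε₀/τ) σ(-ε₀/τ) = 1 + c₀`,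
while `σ'(h) ≤ 1` elsewhere; together with `(z₁ - z₂)² ≤ 2 Σ_y z(x,y)²` this bounds the
Hessian by `2 (1 + γ c₀) / τ² · Σ z²`.
-/

open Real Finset

theorem fderiv_fderiv_sum_comp_affine_apply {E ι : Type*} [NormedAddCommGroup E]
    [NormedSpace ℝ E] [Fintype ι] (φ φ' φ'' : ι → ℝ → ℝ)
    (hφ : ∀ i t, HasDerivAt (φ i) (φ' i t) t) (hφ' : ∀ i t, HasDerivAt (φ' i) (φ'' i t) t)
    (a : ι → E →L[ℝ] ℝ) (b : ι → ℝ) (θ z : E) :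
    fderiv ℝ (fderiv ℝ fun θ => ∑ i, φ i (a i θ + b i)) θ z z =
      ∑ i, φ'' i (a i θ + b i) * a i z ^ 2 := by
  have hfirst : ∀ θ, HasFDerivAt (fun θ => ∑ i, φ i (a i θ + b i))
      (∑ i, φ' i (a i θ + b i) • a i) θ := fun θ =>
    HasFDerivAt.fun_sum fun i _ =>
      (hφ i _).comp_hasFDerivAt θ ((a i).hasFDerivAt.add_const (b i))
  have hsecond : HasFDerivAt (fun θ => ∑ i, φ' i (a i θ + b i) • a i)
      (∑ i, (φ'' i (a i θ + b i) • a i).smulRight (a i)) θ :=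
    HasFDerivAt.fun_sum fun i _ =>
      ((hφ' i _).comp_hasFDerivAt θ ((a i).hasFDerivAt.add_const (b i))).smul_const (a i)
  rw [funext fun θ => (hfirst θ).fderiv, hsecond.fderiv]
  simp [sq, mul_assoc]

noncomputable def logisticLoss (p t : ℝ) : ℝ :=
  -(p * log (sigmoid t) + (1 - p) * log (sigmoid (-t)))

theorem hasDerivAt_log_sigmoid (t : ℝ) :
    HasDerivAt (fun t => log (sigmoid t)) (1 - sigmoid t) t := by
  convert (hasDerivAt_sigmoid t).log (sigmoid_pos t).ne' using 1
  field_simp [(sigmoid_pos t).ne']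

theorem hasDerivAt_logisticLoss (p t : ℝ) :
    HasDerivAt (logisticLoss p) (sigmoid t - p) t := by
  have hneg := (hasDerivAt_log_sigmoid (-t)).comp t (hasDerivAt_neg t)
  refine (((hasDerivAt_log_sigmoid t).const_mul p).add
    (hneg.const_mul (1 - p))).neg.congr_deriv ?_
  rw [sigmoid_neg]; ring

theorem sigmoid_mul_one_sub_sigmoid_nonneg (t : ℝ) : 0 ≤ sigmoid t * (1 - sigmoid t) :=
  mul_nonneg (sigmoid_nonneg t) (sub_nonneg.2 (sigmoid_le_one t))

theorem sigmoid_mul_one_sub_sigmoid (t : ℝ) :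
    sigmoid t * (1 - sigmoid t) = (2 + 2 * cosh t)⁻¹ := by
  have h : exp (-t) * exp t = 1 := by rw [← exp_add]; simp
  rw [← sigmoid_neg, sigmoid_def, sigmoid_def, neg_neg, cosh_eq, ← mul_inv]
  congr 1
  linear_combination h

theorem sigmoid_mul_one_sub_sigmoid_le_quarter (t : ℝ) : sigmoid t * (1 - sigmoid t) ≤ 4⁻¹ := by
  nlinarith [sq_nonneg (sigmoid t - 2⁻¹)]

theorem sigmoid_mul_one_sub_sigmoid_le_of_abs_le {s t : ℝ} (h : |s| ≤ |t|) :
    sigmoid t * (1 - sigmoid t) ≤ sigmoid s * (1 - sigmoid s) := by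
  rw [sigmoid_mul_one_sub_sigmoid, sigmoid_mul_one_sub_sigmoid]
  exact inv_anti₀ (by positivity) (by gcongr; exact cosh_le_cosh.2 h)

theorem sum_le_card_add_card_mul {α : Type*} [Fintype α] (q : α → ℝ) (S : Finset α) (c : ℝ)
    (hq : ∀ p, q p ≤ 1) (hqS : ∀ p ∈ S, q p ≤ 1 + c) :
    ∑ p, q p ≤ Fintype.card α + #S * c := by
  classical
  calc ∑ p, q p ≤ ∑ p, (1 + if p ∈ S then c else 0) := by
        refine sum_le_sum fun p _ => ?_
        split_ifs with hp
        · exact hqS p hp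
        · simpa using hq p
    _ = Fintype.card α + #S * c := by simp [sum_add_distrib]

theorem sq_sub_le_two_mul_sum_sq {Y : Type*} [Fintype Y] (f : Y → ℝ) (y₁ y₂ : Y) :
    (f y₁ - f y₂) ^ 2 ≤ 2 * ∑ y, f y ^ 2 := by
  classical
  rcases eq_or_ne y₁ y₂ with rfl | hne
  · rw [sub_self, sq, mul_zero]
    positivity
  · have hpair : f y₁ ^ 2 + f y₂ ^ 2 ≤ ∑ y, f y ^ 2 := by
      rw [← sum_pair (f := fun y => f y ^ 2) hne]
      exact sum_le_univ_sum_of_nonneg fun y => sq_nonneg _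
    nlinarith [sq_nonneg (f y₁ + f y₂)]

theorem inv_card_sq_mul_sum_mul_sq_sub_le {Y : Type*} [Fintype Y] [Nonempty Y]
    (q : Y → Y → ℝ) (S : Finset (Y × Y)) {c γ : ℝ} (hc : c ≤ 0)
    (hγ : γ ≤ #S / (Fintype.card Y : ℝ) ^ 2) (hq0 : ∀ y₁ y₂, 0 ≤ q y₁ y₂)
    (hq1 : ∀ y₁ y₂, q y₁ y₂ ≤ 1) (hqS : ∀ p ∈ S, q p.1 p.2 ≤ 1 + c) (f : Y → ℝ) :
    ((Fintype.card Y : ℝ) ^ 2)⁻¹ * ∑ y₁, ∑ y₂, q y₁ y₂ * (f y₁ - f y₂) ^ 2 ≤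
      2 * (1 + γ * c) * ∑ y, f y ^ 2 := by
  set K : ℝ := (Fintype.card Y : ℝ)
  set F := ∑ y, f y ^ 2
  have hK : 0 < K := by positivity
  have hF : 0 ≤ F := by positivity
  have hmass : ∑ y₁, ∑ y₂, q y₁ y₂ ≤ K ^ 2 + #S * c := by
    rw [← Fintype.sum_prod_type', sq, ← Nat.cast_mul, ← Fintype.card_prod]
    exact sum_le_card_add_card_mul _ S c (fun p => hq1 p.1 p.2) hqS
  have hratio : K⁻¹ ^ 2 * (K ^ 2 + #S * c) ≤ 1 + γ * c := by
    rw [le_div_iff₀ (by positivity)] at hγ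
    field_simp
    nlinarith
  calc (K ^ 2)⁻¹ * ∑ y₁, ∑ y₂, q y₁ y₂ * (f y₁ - f y₂) ^ 2
      ≤ (K ^ 2)⁻¹ * ∑ y₁, ∑ y₂, q y₁ y₂ * (2 * F) := by
        gcongr with y₁ _ y₂ _
        · exact hq0 y₁ y₂
        · exact sq_sub_le_two_mul_sum_sq f y₁ y₂
    _ = 2 * (K⁻¹ ^ 2 * ∑ y₁, ∑ y₂, q y₁ y₂) * F := by
        simp only [← sum_mul]; ring
    _ ≤ 2 * (1 + γ * c) * F := by
        gcongr
        exact (mul_le_mul_of_nonneg_left hmass (by positivity)).trans hratio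

theorem sum_mul_le_sum_of_sum_eq_one {ι : Type*} {s : Finset ι} {w f : ι → ℝ}
    (hw0 : ∀ i ∈ s, 0 ≤ w i) (hw1 : ∑ i ∈ s, w i = 1) (hf : ∀ i ∈ s, 0 ≤ f i) :
    ∑ i ∈ s, w i * f i ≤ ∑ i ∈ s, f i :=
  sum_le_sum fun i hi =>
    mul_le_of_le_one_left (hf i hi) (hw1 ▸ single_le_sum hw0 hi)

section DPO

variable {X Y : Type*} [Fintype Y]

noncomputable def softmaxPolicy (θ : X × Y → ℝ) (x : X) (y : Y) : ℝ :=
  exp (θ (x, y)) / ∑ y', exp (θ (x, y'))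

noncomputable def dpoMargin (τ : ℝ) (πref : X → Y → ℝ) (θ : X × Y → ℝ) (x : X) (y₁ y₂ : Y) :
    ℝ :=
  (1 / τ) * (log (softmaxPolicy θ x y₁ / πref x y₁) - log (softmaxPolicy θ x y₂ / πref x y₂))

noncomputable def dpoLoss [Fintype X] (τ : ℝ) (D : X → ℝ) (π₀ πref : X → Y → ℝ)
    (p : X → Y → Y → ℝ) (θ : X × Y → ℝ) : ℝ :=
  -∑ x, D x * ∑ y₁, ∑ y₂, π₀ x y₁ * π₀ x y₂ *
    (p x y₁ y₂ * log (sigmoid (dpoMargin τ πref θ x y₁ y₂)) +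
      (1 - p x y₁ y₂) * log (sigmoid (-dpoMargin τ πref θ x y₁ y₂)))

theorem softmaxPolicy_pos [Nonempty Y] (θ : X × Y → ℝ) (x : X) (y : Y) :
    0 < softmaxPolicy θ x y := by
  unfold softmaxPolicy; positivity

theorem log_softmaxPolicy [Nonempty Y] (θ : X × Y → ℝ) (x : X) (y : Y) :
    log (softmaxPolicy θ x y) = θ (x, y) - log (∑ y', exp (θ (x, y'))) := by
  rw [softmaxPolicy, log_div (exp_pos _).ne' (by positivity), log_exp]

theorem dpoMargin_eq [Nonempty Y] {τ : ℝ} {πref : X → Y → ℝ} (hπref : ∀ x y, 0 < πref x y)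
    (θ : X × Y → ℝ) (x : X) (y₁ y₂ : Y) :
    dpoMargin τ πref θ x y₁ y₂ =
      τ⁻¹ * (θ (x, y₁) - θ (x, y₂)) + τ⁻¹ * (log (πref x y₂) - log (πref x y₁)) := by
  rw [dpoMargin, log_div (softmaxPolicy_pos θ x y₁).ne' (hπref x y₁).ne',
    log_div (softmaxPolicy_pos θ x y₂).ne' (hπref x y₂).ne', log_softmaxPolicy, log_softmaxPolicy]
  ring

theorem mul_dpoMargin [Nonempty Y] {τ : ℝ} (hτ : τ ≠ 0) {πref : X → Y → ℝ}
    (hπref : ∀ x y, 0 < πref x y) (θ : X × Y → ℝ) (x : X) (y₁ y₂ : Y) :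
    τ * dpoMargin τ πref θ x y₁ y₂ =
      log (softmaxPolicy θ x y₁ * πref x y₂ / (softmaxPolicy θ x y₂ * πref x y₁)) := by
  have := softmaxPolicy_pos θ x y₁
  have := softmaxPolicy_pos θ x y₂
  have := hπref x y₁
  have := hπref x y₂
  rw [dpoMargin, ← mul_assoc, mul_one_div_cancel hτ, one_mul, ← log_div (by positivity)
    (by positivity)]
  congr 1
  field_simp

theorem dpoLoss_eq_sum_logisticLoss [Fintype X] (τ : ℝ) (D : X → ℝ) (π₀ πref : X → Y → ℝ)
    (p : X → Y → Y → ℝ) (θ : X × Y → ℝ) :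
    dpoLoss τ D π₀ πref p θ = ∑ i : X × Y × Y, D i.1 * (π₀ i.1 i.2.1 * π₀ i.1 i.2.2) *
      logisticLoss (p i.1 i.2.1 i.2.2) (dpoMargin τ πref θ i.1 i.2.1 i.2.2) := by
  simp only [dpoLoss, logisticLoss, Fintype.sum_prod_type, mul_sum, ← sum_neg_distrib]
  simp only [mul_neg, mul_assoc]

theorem fderiv_fderiv_dpoLoss_apply [Fintype X] [Nonempty Y] (τ : ℝ) (D : X → ℝ)
    {π₀ πref : X → Y → ℝ} (hπref : ∀ x y, 0 < πref x y) (p : X → Y → Y → ℝ) (θ z : X × Y → ℝ) :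
    fderiv ℝ (fderiv ℝ (dpoLoss τ D π₀ πref p)) θ z z =
      ∑ x, D x * ∑ y₁, ∑ y₂, π₀ x y₁ * π₀ x y₂ *
        (sigmoid (dpoMargin τ πref θ x y₁ y₂) * (1 - sigmoid (dpoMargin τ πref θ x y₁ y₂)) *
          (τ⁻¹ * (z (x, y₁) - z (x, y₂))) ^ 2) := by
  let w (i : X × Y × Y) : ℝ := D i.1 * (π₀ i.1 i.2.1 * π₀ i.1 i.2.2)
  let a (i : X × Y × Y) : (X × Y → ℝ) →L[ℝ] ℝ :=
    τ⁻¹ • (ContinuousLinearMap.proj (R := ℝ) (φ := fun _ => ℝ) (i.1, i.2.1) -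
      ContinuousLinearMap.proj (i.1, i.2.2))
  let b (i : X × Y × Y) : ℝ := τ⁻¹ * (log (πref i.1 i.2.2) - log (πref i.1 i.2.1))
  have hmargin : ∀ θ i, dpoMargin τ πref θ i.1 i.2.1 i.2.2 = a i θ + b i := fun θ i => by
    simp [dpoMargin_eq hπref, a, b]
  have hloss : dpoLoss τ D π₀ πref p =
      fun θ => ∑ i, w i * logisticLoss (p i.1 i.2.1 i.2.2) (a i θ + b i) := by
    ext θ; simp only [dpoLoss_eq_sum_logisticLoss, hmargin, w]
  rw [hloss, fderiv_fderiv_sum_comp_affine_apply _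
    (fun i t => w i * (sigmoid t - p i.1 i.2.1 i.2.2))
    (fun i t => w i * (sigmoid t * (1 - sigmoid t)))
    (fun i t => (hasDerivAt_logisticLoss _ t).const_mul (w i))
    (fun i t => ((hasDerivAt_sigmoid t).sub_const _).const_mul (w i))]
  simp only [← hmargin, Fintype.sum_prod_type, mul_sum, w, a]
  simp [mul_assoc]

theorem fderiv_fderiv_dpoLoss_apply_le [Fintype X] [Nonempty Y] {τ : ℝ} {D : X → ℝ}
    (hD0 : ∀ x, 0 ≤ D x) (hD1 : ∑ x, D x = 1) {π₀ πref : X → Y → ℝ}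
    (hπ₀ : ∀ x y, π₀ x y = 1 / (Fintype.card Y : ℝ)) (hπref : ∀ x y, 0 < πref x y)
    (p : X → Y → Y → ℝ) (θ : X × Y → ℝ) (S : X → Finset (Y × Y)) {c γ : ℝ} (hc : c ≤ 0)
    (hγ : ∀ x, γ ≤ #(S x) / (Fintype.card Y : ℝ) ^ 2)
    (hS : ∀ x, ∀ q ∈ S x, sigmoid (dpoMargin τ πref θ x q.1 q.2) *
      (1 - sigmoid (dpoMargin τ πref θ x q.1 q.2)) ≤ 1 + c) (z : X × Y → ℝ) :
    fderiv ℝ (fderiv ℝ (dpoLoss τ D π₀ πref p)) θ z z ≤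
      2 * (1 + γ * c) / τ ^ 2 * ∑ q : X × Y, z q ^ 2 := by
  set K : ℝ := (Fintype.card Y : ℝ)
  set curv := fun x y₁ y₂ => sigmoid (dpoMargin τ πref θ x y₁ y₂) *
    (1 - sigmoid (dpoMargin τ πref θ x y₁ y₂))
  set T := fun x => (K ^ 2)⁻¹ * ∑ y₁, ∑ y₂, curv x y₁ y₂ * (z (x, y₁) - z (x, y₂)) ^ 2
  have hT0 : ∀ x, 0 ≤ T x := fun x =>
    mul_nonneg (by positivity) (sum_nonneg fun y₁ _ => sum_nonneg fun y₂ _ =>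
      mul_nonneg (sigmoid_mul_one_sub_sigmoid_nonneg _) (sq_nonneg _))
  have hT : ∀ x, T x ≤ 2 * (1 + γ * c) * ∑ y, z (x, y) ^ 2 := fun x =>
    inv_card_sq_mul_sum_mul_sq_sub_le (curv x) (S x) hc (hγ x)
      (fun _ _ => sigmoid_mul_one_sub_sigmoid_nonneg _)
      (fun _ _ => (sigmoid_mul_one_sub_sigmoid_le_quarter _).trans (by norm_num)) (hS x) _
  calc fderiv ℝ (fderiv ℝ (dpoLoss τ D π₀ πref p)) θ z z = (τ⁻¹) ^ 2 * ∑ x, D x * T x := by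
        simp only [fderiv_fderiv_dpoLoss_apply τ D hπref, hπ₀, mul_sum, T]
        refine sum_congr rfl fun x _ => sum_congr rfl fun y₁ _ => sum_congr rfl fun y₂ _ => ?_
        ring
    _ ≤ (τ⁻¹) ^ 2 * ∑ x, 2 * (1 + γ * c) * ∑ y, z (x, y) ^ 2 := by
        refine mul_le_mul_of_nonneg_left ?_ (sq_nonneg _)
        exact (sum_mul_le_sum_of_sum_eq_one (fun x _ => hD0 x) hD1 fun x _ => hT0 x).trans
          (sum_le_sum fun x _ => hT x)
    _ = 2 * (1 + γ * c) / τ ^ 2 * ∑ q : X × Y, z q ^ 2 := by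
        rw [← mul_sum, Fintype.sum_prod_type]; ring

theorem fderiv_fderiv_dpoLoss_apply_nonneg [Fintype X] [Nonempty Y] (τ : ℝ) {D : X → ℝ}
    (hD0 : ∀ x, 0 ≤ D x) {π₀ πref : X → Y → ℝ} (hπ₀ : ∀ x y, 0 ≤ π₀ x y)
    (hπref : ∀ x y, 0 < πref x y) (p : X → Y → Y → ℝ) (θ z : X × Y → ℝ) :
    0 ≤ fderiv ℝ (fderiv ℝ (dpoLoss τ D π₀ πref p)) θ z z := by
  rw [fderiv_fderiv_dpoLoss_apply τ D hπref]
  refine sum_nonneg fun x _ => mul_nonneg (hD0 x) (sum_nonneg fun y₁ _ => sum_nonneg fun y₂ _ =>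
    mul_nonneg (mul_nonneg (hπ₀ x y₁) (hπ₀ x y₂)) ?_)
  exact mul_nonneg (sigmoid_mul_one_sub_sigmoid_nonneg _) (sq_nonneg _)

theorem sigmoid_mul_one_sub_sigmoid_dpoMargin_le [Nonempty Y] {τ ε : ℝ} (hτ : 0 < τ)
    (hε : 0 ≤ ε) {πref : X → Y → ℝ} (hπref : ∀ x y, 0 < πref x y) {θ : X × Y → ℝ} {x : X}
    {y₁ y₂ : Y}
    (h : ε ≤ |log (softmaxPolicy θ x y₁ * πref x y₂ / (softmaxPolicy θ x y₂ * πref x y₁))|) :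
    sigmoid (dpoMargin τ πref θ x y₁ y₂) * (1 - sigmoid (dpoMargin τ πref θ x y₁ y₂)) ≤
      sigmoid (ε / τ) * (1 - sigmoid (ε / τ)) := by
  rw [← mul_dpoMargin hτ.ne' hπref, abs_mul, abs_of_pos hτ, ← div_le_iff₀' hτ] at h
  exact sigmoid_mul_one_sub_sigmoid_le_of_abs_le (by rwa [abs_of_nonneg (div_nonneg hε hτ.le)])

end DPO

theorem dpo_data_selection_smoothness_general
    {X Y : Type*} [Fintype X] [Fintype Y] [Nonempty Y]
    (τ : ℝ) (hτ : 0 < τ)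
    (D : X → ℝ) (hD0 : ∀ x, 0 ≤ D x) (hD1 : ∑ x : X, D x = 1)
    (πref π₀ : X → Y → ℝ)
    (hπref0 : ∀ x y, 0 < πref x y)
    (hπ₀uniform : ∀ x y, π₀ x y = 1 / (Fintype.card Y : ℝ))
    (σ : ℝ → ℝ) (hσ : ∀ t, σ t = (1 + Real.exp (-t))⁻¹)
    (pstar : X → Y → Y → ℝ)
    (πθ : (X × Y → ℝ) → X → Y → ℝ)
    (hπθ : ∀ θ x y, πθ θ x y = Real.exp (θ (x, y)) / ∑ y' : Y, Real.exp (θ (x, y')))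
    (hbar : (X × Y → ℝ) → X → Y → Y → ℝ)
    (hhbar : ∀ θ x y₁ y₂, hbar θ x y₁ y₂ =
      (1 / τ) * (Real.log (πθ θ x y₁ / πref x y₁) - Real.log (πθ θ x y₂ / πref x y₂)))
    (L : (X × Y → ℝ) → ℝ)
    (hL : ∀ θ, L θ = -∑ x : X, D x * ∑ y₁ : Y, ∑ y₂ : Y,
      π₀ x y₁ * π₀ x y₂ *
        (pstar x y₁ y₂ * Real.log (σ (hbar θ x y₁ y₂)) +
         (1 - pstar x y₁ y₂) * Real.log (σ (-(hbar θ x y₁ y₂)))))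
    (ε₀ : ℝ) (hε₀ : 0 < ε₀)
    (c₀ : ℝ) (hc₀ : c₀ = σ (ε₀ / τ) * σ (-(ε₀ / τ)) - 1)
    (Ω : (X × Y → ℝ) → X → Finset (Y × Y))
    (hΩ : ∀ θ x (p : Y × Y), p ∈ Ω θ x ↔
      ε₀ ≤ |Real.log (pstar x p.1 p.2 / (1 - pstar x p.1 p.2))| ∧
      ε₀ ≤ |Real.log (πθ θ x p.1 * πref x p.2 / (πθ θ x p.2 * πref x p.1))|)
    (γ : ℝ)
    (θ : X × Y → ℝ)
    (hγθ : ∀ x, γ ≤ ((Ω θ x).card : ℝ) / (Fintype.card Y : ℝ) ^ 2) :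
    ∀ z : X × Y → ℝ,
      |fderiv ℝ (fderiv ℝ L) θ z z| ≤
        (4 * (γ * c₀ + 1) / τ ^ 2) * ∑ p : X × Y, z p ^ 2 := by
  intro z
  obtain rfl : σ = sigmoid := funext hσ
  obtain rfl : πθ = softmaxPolicy := funext₃ hπθ
  obtain rfl : hbar = dpoMargin τ πref := funext fun θ => funext₃ (hhbar θ)
  obtain rfl : L = dpoLoss τ D π₀ πref pstar := funext hL
  rw [sigmoid_neg] at hc₀
  have hc₀_nonpos : c₀ ≤ 0 := by linarith [sigmoid_mul_one_sub_sigmoid_le_quarter (ε₀ / τ)]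
  have hΩ_curv : ∀ x, ∀ p ∈ Ω θ x, sigmoid (dpoMargin τ πref θ x p.1 p.2) *
      (1 - sigmoid (dpoMargin τ πref θ x p.1 p.2)) ≤ 1 + c₀ := fun x p hp => by
    rw [hc₀, add_sub_cancel]
    exact sigmoid_mul_one_sub_sigmoid_dpoMargin_le hτ hε₀.le hπref0 ((hΩ θ x p).1 hp).2
  have hle := fderiv_fderiv_dpoLoss_apply_le hD0 hD1 hπ₀uniform hπref0 pstar θ (Ω θ) hc₀_nonpos
    hγθ hΩ_curv z
  have hnonneg := fderiv_fderiv_dpoLoss_apply_nonneg τ hD0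
    (π₀ := π₀) (fun x y => by rw [hπ₀uniform]; positivity) hπref0 pstar θ z
  have hhalf : 2 * (1 + γ * c₀) / τ ^ 2 * ∑ p : X × Y, z p ^ 2 =
      (4 * (γ * c₀ + 1) / τ ^ 2) * (∑ p : X × Y, z p ^ 2) / 2 := by ring
  rw [abs_of_nonneg hnonneg]
  linarith

/-- With uniform offline sampling π₀, at every parameter θ whose large-
margin-agreement fraction γ(θ,x) = |Ω(θ,x)|/K² is at least γ for all x, the second
derivative of the DPO loss satisfies
|D²L_DPO(θ)(z,z)| ≤ (4·(γ·c₀ + 1)/τ²)·Σ_{x,y} z(x,y)², where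
c₀ = σ(ε₀/τ)·σ(−ε₀/τ) − 1. -/
theorem dpo_data_selection_smoothness
    {X Y : Type*} [Fintype X] [Fintype Y] [Nonempty X] [Nonempty Y]
    (r : X → Y → ℝ) (τ : ℝ) (hτ : 0 < τ)
    (D : X → ℝ) (hD0 : ∀ x, 0 ≤ D x) (hD1 : ∑ x : X, D x = 1)
    (πref π₀ : X → Y → ℝ)
    (hπref0 : ∀ x y, 0 < πref x y) (hπref1 : ∀ x, ∑ y : Y, πref x y = 1)
    (hπ₀uniform : ∀ x y, π₀ x y = 1 / (Fintype.card Y : ℝ))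
    (σ : ℝ → ℝ) (hσ : ∀ t, σ t = (1 + Real.exp (-t))⁻¹)
    (pstar : X → Y → Y → ℝ)
    (hpstar : ∀ x y₁ y₂, pstar x y₁ y₂ = σ (r x y₁ - r x y₂))
    (πθ : (X × Y → ℝ) → X → Y → ℝ)
    (hπθ : ∀ θ x y, πθ θ x y = Real.exp (θ (x, y)) / ∑ y' : Y, Real.exp (θ (x, y')))
    (hbar : (X × Y → ℝ) → X → Y → Y → ℝ)
    (hhbar : ∀ θ x y₁ y₂, hbar θ x y₁ y₂ =
      (1 / τ) * (Real.log (πθ θ x y₁ / πref x y₁) - Real.log (πθ θ x y₂ / πref x y₂)))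
    (L : (X × Y → ℝ) → ℝ)
    (hL : ∀ θ, L θ = -∑ x : X, D x * ∑ y₁ : Y, ∑ y₂ : Y,
      π₀ x y₁ * π₀ x y₂ *
        (pstar x y₁ y₂ * Real.log (σ (hbar θ x y₁ y₂)) +
         (1 - pstar x y₁ y₂) * Real.log (σ (-(hbar θ x y₁ y₂)))))
    (ε₀ : ℝ) (hε₀ : 0 < ε₀)
    (c₀ : ℝ) (hc₀ : c₀ = σ (ε₀ / τ) * σ (-(ε₀ / τ)) - 1)
    (hc₀mem : -1 < c₀ ∧ c₀ < 0)
    (Ω : (X × Y → ℝ) → X → Finset (Y × Y))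
    (hΩ : ∀ θ x (p : Y × Y), p ∈ Ω θ x ↔
      ε₀ ≤ |Real.log (pstar x p.1 p.2 / (1 - pstar x p.1 p.2))| ∧
      ε₀ ≤ |Real.log (πθ θ x p.1 * πref x p.2 / (πθ θ x p.2 * πref x p.1))|)
    (γ : ℝ) (hγ0 : 0 ≤ γ) (hγ1 : γ ≤ 1)
    (θ : X × Y → ℝ)
    (hγθ : ∀ x, γ ≤ ((Ω θ x).card : ℝ) / (Fintype.card Y : ℝ) ^ 2) :
    ∀ z : X × Y → ℝ,
      |fderiv ℝ (fderiv ℝ L) θ z z| ≤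
        (4 * (γ * c₀ + 1) / τ ^ 2) * ∑ p : X × Y, z p ^ 2 :=
  dpo_data_selection_smoothness_general τ hτ D hD0 hD1 πref π₀ hπref0 hπ₀uniform σ hσ pstar πθ hπθ
    hbar hhbar L hL ε₀ hε₀ c₀ hc₀ Ω hΩ γ θ hγθ
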